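/- arXiv:2202.10072 — 2 statements merged into one kernel-verified Lean document; each statement's English description precedes it below -/
import Mathlib

section
/- For every integer R ≥ 2, the Attacker-Defender game with equal endowments R has exactly one mixed-strategy Nash equilibrium (a*, d*), given by: a*_0 = (R−l*)/R, a*_i = (R−l*)/((R−i+1)(R−i)) for 1 ≤ i ≤ l*, a*_i = 0 for l* < i ≤ R; and d*_j = 1/(R−j) for 0 ≤ j < l*, d*_{l*} = 1 − Σ_{j=0}^{l*−1} 1/(R−j), d*_j = 0 for l* < j ≤ R. -/
/-- Attacker's payoff: `R_A - i + R_D - j` if `i > j`, else `R_A - i`. -/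
noncomputable def piA (RA RD i j : ℕ) : ℝ :=
  if j < i then (RA : ℝ) - i + ((RD : ℝ) - j) else (RA : ℝ) - i

/-- Defender's payoff: `0` if `i > j`, else `R_D - j`. -/
noncomputable def piD (RD i j : ℕ) : ℝ :=
  if j < i then 0 else (RD : ℝ) - j

/-- A mixed strategy over the investments `{0, 1, ..., R}`. -/
def IsMixed (R : ℕ) (s : ℕ → ℝ) : Prop :=
  (∀ i, 0 ≤ s i) ∧ (∀ i, R < i → s i = 0) ∧ ∑ i ∈ Finset.range (R + 1), s i = 1

/-- Attacker's expected payoff under mixed strategies. -/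
noncomputable def PayA (RA RD : ℕ) (a d : ℕ → ℝ) : ℝ :=
  ∑ i ∈ Finset.range (RA + 1), ∑ j ∈ Finset.range (RD + 1), a i * d j * piA RA RD i j

/-- Defender's expected payoff under mixed strategies. -/
noncomputable def PayD (RA RD : ℕ) (a d : ℕ → ℝ) : ℝ :=
  ∑ i ∈ Finset.range (RA + 1), ∑ j ∈ Finset.range (RD + 1), a i * d j * piD RD i j

/-- Mixed-strategy Nash equilibrium of the A-D game with endowments `RA`, `RD`. -/
def IsNash (RA RD : ℕ) (a d : ℕ → ℝ) : Prop :=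
  IsMixed RA a ∧ IsMixed RD d ∧
  (∀ a', IsMixed RA a' → PayA RA RD a' d ≤ PayA RA RD a d) ∧
  (∀ d', IsMixed RD d' → PayD RA RD a d' ≤ PayD RA RD a d)

/-- The `n`-th harmonic number `H_n = 1 + 1/2 + ... + 1/n` (with `H_0 = 0`). -/
noncomputable def H (n : ℕ) : ℝ := ∑ k ∈ Finset.Icc 1 n, (1 : ℝ) / k

/-- `l` is the upper bound `l*` for endowment `R`:
the unique `1 ≤ l ≤ R - 1` with `H_R - H_{R-l} < 1 < H_R - H_{R-l-1}`. -/
def IsUpperBound (R l : ℕ) : Prop :=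
  1 ≤ l ∧ l ≤ R - 1 ∧ H R - H (R - l) < 1 ∧ 1 < H R - H (R - l - 1)

/-- Attacker's equilibrium mixed strategy (defender endowment `R`, upper bound `l`). -/
noncomputable def astar (R l : ℕ) : ℕ → ℝ := fun i =>
  if i = 0 then ((R : ℝ) - l) / R
  else if i ≤ l then ((R : ℝ) - l) / (((R : ℝ) - i + 1) * ((R : ℝ) - i))
  else 0

/-- Defender's equilibrium mixed strategy (defender endowment `R`, upper bound `l`). -/
noncomputable def dstar (R l : ℕ) : ℕ → ℝ := fun j =>
  if j < l then 1 / ((R : ℝ) - j)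
  else if j = l then 1 - ∑ k ∈ Finset.range l, 1 / ((R : ℝ) - k)
  else 0

section Aux
variable {R : ℕ}

/-- Cumulative weighted sum for defender strategy. -/
noncomputable def Tt (R : ℕ) (d : ℕ → ℝ) (i : ℕ) : ℝ :=
  ∑ j ∈ Finset.range i, d j * ((R:ℝ) - j)

noncomputable def phiA (R : ℕ) (d : ℕ → ℝ) (i : ℕ) : ℝ := (R:ℝ) - i + Tt R d i

noncomputable def Aa (a : ℕ → ℝ) (j : ℕ) : ℝ := ∑ i ∈ Finset.range (j+1), a i

noncomputable def phiD (R : ℕ) (a : ℕ → ℝ) (j : ℕ) : ℝ := ((R:ℝ) - j) * Aa a j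

lemma payA_eq (a d : ℕ → ℝ) (hd1 : ∑ j ∈ Finset.range (R+1), d j = 1) :
    PayA R R a d = ∑ i ∈ Finset.range (R+1), a i * phiA R d i := by
  unfold PayA
  refine Finset.sum_congr rfl fun i hi => ?_
  have hiR : i ≤ R := by simpa [Nat.lt_succ_iff] using hi
  have h1 : ∀ j ∈ Finset.range (R+1),
      a i * d j * piA R R i j
        = a i * (d j * ((R:ℝ) - i)) + a i * (if j < i then d j * ((R:ℝ) - j) else 0) := by
    intro j hj
    unfold piA
    split <;> ring
  rw [Finset.sum_congr rfl h1, Finset.sum_add_distrib, ← Finset.mul_sum, ← Finset.mul_sum,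
    ← Finset.sum_mul, hd1]
  have h2 : ∑ j ∈ Finset.range (R+1), (if j < i then d j * ((R:ℝ) - j) else 0)
      = Tt R d i := by
    rw [Tt, ← Finset.sum_subset (Finset.range_subset_range.mpr (by omega) : Finset.range i ⊆ Finset.range (R+1))]
    · exact Finset.sum_congr rfl fun j hj => by
        rw [if_pos (Finset.mem_range.mp hj)]
    · intro j _ hj
      rw [if_neg (by simpa using hj)]
  rw [h2, phiA]
  ring

lemma payD_eq (a d : ℕ → ℝ) :
    PayD R R a d = ∑ j ∈ Finset.range (R+1), d j * phiD R a j := by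
  unfold PayD
  rw [Finset.sum_comm]
  refine Finset.sum_congr rfl fun j hj => ?_
  have hjR : j ≤ R := by simpa [Nat.lt_succ_iff] using hj
  have h1 : ∀ i ∈ Finset.range (R+1),
      a i * d j * piD R i j = d j * (if j < i then 0 else a i * ((R:ℝ) - j)) := by
    intro i hi
    unfold piD
    split <;> ring
  rw [Finset.sum_congr rfl h1, ← Finset.mul_sum]
  have h2 : ∑ i ∈ Finset.range (R+1), (if j < i then 0 else a i * ((R:ℝ) - j))
      = Aa a j * ((R:ℝ) - j) := by
    rw [Aa, Finset.sum_mul,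
      ← Finset.sum_subset (Finset.range_subset_range.mpr (by omega) : Finset.range (j+1) ⊆ Finset.range (R+1))]
    · exact Finset.sum_congr rfl fun i hi => by
        rw [if_neg (by simpa [Nat.lt_succ_iff] using Finset.mem_range.mp hi)]
    · intro i _ hi
      rw [if_pos (by simpa using hi)]
  rw [h2, phiD]
  ring

lemma isMixed_pure (i0 : ℕ) (h : i0 ≤ R) :
    IsMixed R (fun i => if i = i0 then (1:ℝ) else 0) := by
  refine ⟨fun i => by positivity, fun i hi => if_neg (by omega), ?_⟩
  rw [Finset.sum_ite_eq' (Finset.range (R+1)) i0 (fun _ => (1:ℝ))]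
  rw [if_pos (Finset.mem_range.mpr (by omega))]

lemma sum_pure_mul (i0 : ℕ) (h : i0 ≤ R) (f : ℕ → ℝ) :
    ∑ i ∈ Finset.range (R+1), (if i = i0 then (1:ℝ) else 0) * f i = f i0 := by
  have : ∀ i ∈ Finset.range (R+1), (if i = i0 then (1:ℝ) else 0) * f i
      = if i = i0 then f i else 0 := by
    intro i _; split <;> simp
  rw [Finset.sum_congr rfl this, Finset.sum_ite_eq' (Finset.range (R+1)) i0 f,
    if_pos (Finset.mem_range.mpr (by omega))]

lemma mixed_sum_le {s f : ℕ → ℝ} (hs : IsMixed R s) {c : ℝ}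
    (h : ∀ i ∈ Finset.range (R+1), f i ≤ c) :
    ∑ i ∈ Finset.range (R+1), s i * f i ≤ c := by
  calc ∑ i ∈ Finset.range (R+1), s i * f i
      ≤ ∑ i ∈ Finset.range (R+1), s i * c :=
        Finset.sum_le_sum fun i hi => mul_le_mul_of_nonneg_left (h i hi) (hs.1 i)
    _ = c := by rw [← Finset.sum_mul, hs.2.2, one_mul]

lemma mixed_support_eq {s f : ℕ → ℝ} (hs : IsMixed R s) {c : ℝ}
    (h : ∀ i ∈ Finset.range (R+1), f i ≤ c)
    (hv : ∑ i ∈ Finset.range (R+1), s i * f i = c)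
    {i0 : ℕ} (hi0 : i0 ≤ R) (hne : s i0 ≠ 0) : f i0 = c := by
  by_contra hcon
  have hlt : f i0 < c := lt_of_le_of_ne (h i0 (Finset.mem_range.mpr (by omega))) hcon
  have hpos : 0 < s i0 := lt_of_le_of_ne (hs.1 i0) (Ne.symm hne)
  have : ∑ i ∈ Finset.range (R+1), s i * f i < ∑ i ∈ Finset.range (R+1), s i * c := by
    refine Finset.sum_lt_sum (fun i hi => mul_le_mul_of_nonneg_left (h i hi) (hs.1 i))
      ⟨i0, Finset.mem_range.mpr (by omega), by exact mul_lt_mul_of_pos_left hlt hpos⟩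
  rw [hv, ← Finset.sum_mul, hs.2.2, one_mul] at this
  exact lt_irrefl c this


end Aux
section Aux2
variable {R : ℕ}

/-- Partial sum `S k = ∑_{j<k} 1/(R-j)` equals `H R - H (R-k)` for `k ≤ R`. -/
lemma sum_inv_eq_H (k : ℕ) (hk : k ≤ R) :
    ∑ j ∈ Finset.range k, 1 / ((R:ℝ) - j) = H R - H (R - k) := by
  induction k with
  | zero => simp
  | succ n ih =>
    have hn : n ≤ R := by omega
    rw [Finset.sum_range_succ, ih hn]
    have h1 : R - n = (R - (n+1)) + 1 := by omega
    have h2 : H (R - n) = H (R - (n+1)) + 1 / ((R:ℝ) - n) := by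
      rw [h1, H, H, Finset.sum_Icc_succ_top (by omega)]
      have : ((R - (n+1) + 1 : ℕ) : ℝ) = (R:ℝ) - n := by
        push_cast [Nat.cast_sub (by omega : n+1 ≤ R)]; ring
      rw [this]
    rw [h2]; ring

lemma sum_inv_mono {k1 k2 : ℕ} (h : k1 < k2) (h2 : k2 ≤ R) :
    ∑ j ∈ Finset.range k1, 1 / ((R:ℝ) - j) < ∑ j ∈ Finset.range k2, 1 / ((R:ℝ) - j) := by
  refine Finset.sum_lt_sum_of_subset (Finset.range_subset_range.mpr (by omega))
    (Finset.mem_range.mpr h) (by simpa using h) ?_ ?_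
  · have h3 : (k1 : ℝ) < R := by exact_mod_cast (by omega : k1 < R)
    have : (0:ℝ) < (R:ℝ) - k1 := by linarith
    positivity
  · intro j hj _
    have h3 : (j : ℝ) < R := by
      have := Finset.mem_range.mp hj; exact_mod_cast (by omega : j < R)
    have : (0:ℝ) < (R:ℝ) - j := by linarith
    positivity

lemma sum_inv_mono' {k1 k2 : ℕ} (h : k1 ≤ k2) (h2 : k2 ≤ R) :
    ∑ j ∈ Finset.range k1, 1 / ((R:ℝ) - j) ≤ ∑ j ∈ Finset.range k2, 1 / ((R:ℝ) - j) := by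
  rcases eq_or_lt_of_le h with rfl | hlt
  · exact le_refl _
  · exact le_of_lt (sum_inv_mono hlt h2)

end Aux2
section Aux3
variable {R l : ℕ}

lemma ub_lt (hR : 2 ≤ R) (hl : IsUpperBound R l) : 1 ≤ l ∧ l < R := by
  obtain ⟨h1, h2, _, _⟩ := hl
  exact ⟨h1, by omega⟩

lemma ub_S_lt (hR : 2 ≤ R) (hl : IsUpperBound R l) :
    ∑ j ∈ Finset.range l, 1 / ((R:ℝ) - j) < 1 := by
  rw [sum_inv_eq_H l (le_of_lt (ub_lt hR hl).2)]
  exact hl.2.2.1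

lemma ub_lt_S (hR : 2 ≤ R) (hl : IsUpperBound R l) :
    1 < ∑ j ∈ Finset.range (l+1), 1 / ((R:ℝ) - j) := by
  rw [sum_inv_eq_H (l+1) (by have := (ub_lt hR hl).2; omega)]
  have : R - (l+1) = R - l - 1 := by omega
  rw [this]
  exact hl.2.2.2

lemma tele_aux (c x : ℝ) (h1 : x ≠ 0) (h2 : x - 1 ≠ 0) :
    c / x + c / (x * (x - 1)) = c / (x - 1) := by
  field_simp
  ring

lemma tele_aux2 (c x : ℝ) (h1 : x ≠ 0) (h2 : x - 1 ≠ 0) :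
    c / (x - 1) - c / x = c / (x * (x - 1)) := by
  field_simp
  ring

lemma astar_partial (hR : 2 ≤ R) (hl : IsUpperBound R l) :
    ∀ j, j ≤ l → Aa (astar R l) j = ((R:ℝ) - l) / ((R:ℝ) - j) := by
  have hlR : l < R := (ub_lt hR hl).2
  intro j hj
  induction j with
  | zero => simp [Aa, astar]
  | succ n ih =>
    have hn : n ≤ l := by omega
    have h1 : ((n:ℝ)) < (R:ℝ) - 1 := by
      have : n + 1 < R := by omega
      have : ((n+1:ℕ):ℝ) < (R:ℝ) := by exact_mod_cast this
      push_cast at this; linarith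
    have hd1 : ((R:ℝ) - n) ≠ 0 := by linarith
    have hd2 : ((R:ℝ) - n - 1) ≠ 0 := by linarith
    rw [Aa, Finset.sum_range_succ, ← Aa, ih hn, astar]
    rw [if_neg (by omega), if_pos hj]
    push_cast
    rw [show ((R:ℝ) - ((n:ℝ)+1) + 1) = ((R:ℝ) - n) by ring,
      show ((R:ℝ) - ((n:ℝ)+1)) = ((R:ℝ) - n - 1) by ring]
    exact tele_aux _ _ hd1 hd2

lemma astar_zero_of_gt (j : ℕ) (hj : l < j) : astar R l j = 0 := by
  rw [astar, if_neg (by omega), if_neg (by omega)]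

lemma astar_nonneg (hR : 2 ≤ R) (hl : IsUpperBound R l) (i : ℕ) : 0 ≤ astar R l i := by
  have hlR : l < R := (ub_lt hR hl).2
  have hRl : (0:ℝ) < (R:ℝ) - l := by
    have : (l:ℝ) < R := by exact_mod_cast hlR
    linarith
  rw [astar]
  split
  · positivity
  · split
    · rename_i h1 h2
      have : (i:ℝ) < R := by exact_mod_cast (by omega : i < R)
      have hx : (0:ℝ) < (R:ℝ) - i := by linarith
      have hy : (0:ℝ) < (R:ℝ) - i + 1 := by linarith
      positivity
    · exact le_refl 0

lemma astar_mixed (hR : 2 ≤ R) (hl : IsUpperBound R l) : IsMixed R (astar R l) := by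
  have hlR : l < R := (ub_lt hR hl).2
  refine ⟨astar_nonneg hR hl, fun i hi => astar_zero_of_gt i (by omega), ?_⟩
  have h1 : ∑ i ∈ Finset.range (R+1), astar R l i = ∑ i ∈ Finset.range (l+1), astar R l i := by
    rw [← Finset.sum_subset (Finset.range_subset_range.mpr (by omega : l+1 ≤ R+1))]
    intro i _ hi
    exact astar_zero_of_gt i (by simpa using hi)
  rw [h1, ← Aa, astar_partial hR hl l le_rfl]
  have h2 : (l:ℝ) < R := by exact_mod_cast hlR
  exact div_self (by linarith)

lemma dstar_zero_of_gt (j : ℕ) (hj : l < j) : dstar R l j = 0 := by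
  rw [dstar, if_neg (by omega), if_neg (by omega)]

lemma dstar_nonneg (hR : 2 ≤ R) (hl : IsUpperBound R l) (j : ℕ) : 0 ≤ dstar R l j := by
  have hlR : l < R := (ub_lt hR hl).2
  rw [dstar]
  split
  · rename_i h1
    have : (j:ℝ) < R := by exact_mod_cast (by omega : j < R)
    have hx : (0:ℝ) < (R:ℝ) - j := by linarith
    positivity
  · split
    · linarith [ub_S_lt hR hl]
    · exact le_refl 0

lemma dstar_sum (hR : 2 ≤ R) (hl : IsUpperBound R l) :
    ∑ j ∈ Finset.range (R+1), dstar R l j = 1 := by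
  have hlR : l < R := (ub_lt hR hl).2
  have h1 : ∑ j ∈ Finset.range (R+1), dstar R l j = ∑ j ∈ Finset.range (l+1), dstar R l j := by
    rw [← Finset.sum_subset (Finset.range_subset_range.mpr (by omega : l+1 ≤ R+1))]
    intro j _ hj
    exact dstar_zero_of_gt j (by simpa using hj)
  rw [h1, Finset.sum_range_succ]
  have h2 : ∑ j ∈ Finset.range l, dstar R l j = ∑ j ∈ Finset.range l, 1 / ((R:ℝ) - j) :=
    Finset.sum_congr rfl fun j hj => by rw [dstar, if_pos (Finset.mem_range.mp hj)]
  rw [h2, dstar, if_neg (lt_irrefl l), if_pos rfl]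
  ring

lemma dstar_mixed (hR : 2 ≤ R) (hl : IsUpperBound R l) : IsMixed R (dstar R l) := by
  have hlR : l < R := (ub_lt hR hl).2
  exact ⟨dstar_nonneg hR hl, fun j hj => dstar_zero_of_gt j (by omega), dstar_sum hR hl⟩

lemma Tt_dstar (hR : 2 ≤ R) (hl : IsUpperBound R l) :
    ∀ i, i ≤ l → Tt R (dstar R l) i = i := by
  have hlR : l < R := (ub_lt hR hl).2
  intro i hi
  induction i with
  | zero => simp [Tt]
  | succ n ih =>
    have hn : n ≤ l := by omega
    have hnl : n < l := by omega
    have hd : ((R:ℝ) - n) ≠ 0 := by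
      have : (n:ℝ) < R := by exact_mod_cast (by omega : n < R)
      linarith
    rw [Tt, Finset.sum_range_succ, ← Tt, ih hn, dstar, if_pos hnl]
    push_cast
    rw [one_div_mul_cancel hd]

end Aux3
section Aux4
variable {R l : ℕ}

lemma Tt_high {d : ℕ → ℝ} (hz : ∀ j, l < j → d j = 0) :
    ∀ i, l + 1 ≤ i → Tt R d i = Tt R d (l+1) := by
  intro i hi
  rw [Tt, Tt, ← Finset.sum_subset (Finset.range_subset_range.mpr hi)]
  intro j _ hj
  rw [hz j (by simpa using hj), zero_mul]

lemma dstarl_mul_lt (hR : 2 ≤ R) (hl : IsUpperBound R l) :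
    dstar R l l * ((R:ℝ) - l) < 1 := by
  have hlR : l < R := (ub_lt hR hl).2
  have hx : (0:ℝ) < (R:ℝ) - l := by
    have : (l:ℝ) < R := by exact_mod_cast hlR
    linarith
  have h1 := ub_lt_S hR hl
  rw [Finset.sum_range_succ] at h1
  have h2 : dstar R l l < 1 / ((R:ℝ) - l) := by
    rw [dstar, if_neg (lt_irrefl l), if_pos rfl]
    linarith
  calc dstar R l l * ((R:ℝ) - l) < (1 / ((R:ℝ) - l)) * ((R:ℝ) - l) :=
        mul_lt_mul_of_pos_right h2 hx
    _ = 1 := one_div_mul_cancel (ne_of_gt hx)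

lemma phiA_dstar_le (hR : 2 ≤ R) (hl : IsUpperBound R l) :
    ∀ i ∈ Finset.range (R+1), phiA R (dstar R l) i ≤ (R:ℝ) := by
  have hlR : l < R := (ub_lt hR hl).2
  intro i hi
  have hiR : i ≤ R := by simpa [Nat.lt_succ_iff] using hi
  rcases le_or_gt i l with h | h
  · rw [phiA, Tt_dstar hR hl i h]; ring_nf; exact le_refl _
  · have h1 : Tt R (dstar R l) i = Tt R (dstar R l) (l+1) :=
      Tt_high (fun j hj => dstar_zero_of_gt j hj) i h
    have h2 : Tt R (dstar R l) (l+1) = l + dstar R l l * ((R:ℝ) - l) := by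
      rw [Tt, Finset.sum_range_succ, ← Tt, Tt_dstar hR hl l le_rfl]
    have h3 : (l:ℝ) + 1 ≤ (i:ℝ) := by exact_mod_cast h
    have h4 := dstarl_mul_lt hR hl
    rw [phiA, h1, h2]
    linarith

lemma payA_star (hR : 2 ≤ R) (hl : IsUpperBound R l) :
    PayA R R (astar R l) (dstar R l) = R := by
  rw [payA_eq _ _ (dstar_sum hR hl)]
  have h1 : ∀ i ∈ Finset.range (R+1),
      astar R l i * phiA R (dstar R l) i = astar R l i * (R:ℝ) := by
    intro i hi
    rcases le_or_gt i l with h | h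
    · rw [phiA, Tt_dstar hR hl i h]; ring_nf
    · rw [astar_zero_of_gt i h, zero_mul, zero_mul]
  rw [Finset.sum_congr rfl h1, ← Finset.sum_mul, (astar_mixed hR hl).2.2, one_mul]

lemma Aa_astar_high (hR : 2 ≤ R) (hl : IsUpperBound R l) :
    ∀ j, l ≤ j → Aa (astar R l) j = 1 := by
  intro j hj
  have h1 : Aa (astar R l) j = Aa (astar R l) l := by
    rw [Aa, Aa, ← Finset.sum_subset (Finset.range_subset_range.mpr (by omega : l+1 ≤ j+1))]
    intro i _ hi
    exact astar_zero_of_gt i (by simpa using hi)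
  rw [h1, astar_partial hR hl l le_rfl]
  have : (l:ℝ) < R := by exact_mod_cast (ub_lt hR hl).2
  exact div_self (by linarith)

lemma phiD_astar_le (hR : 2 ≤ R) (hl : IsUpperBound R l) :
    ∀ j ∈ Finset.range (R+1), phiD R (astar R l) j ≤ (R:ℝ) - l := by
  intro j hj
  have hjR : j ≤ R := by simpa [Nat.lt_succ_iff] using hj
  rcases le_or_gt j l with h | h
  · have hjR' : (j:ℝ) < R := by
      exact_mod_cast (by have := (ub_lt hR hl).2; omega : j < R)
    rw [phiD, astar_partial hR hl j h, mul_div_cancel₀ _ (by linarith : (R:ℝ) - j ≠ 0)]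
  · rw [phiD, Aa_astar_high hR hl j (le_of_lt h), mul_one]
    have : (l:ℝ) ≤ (j:ℝ) := by exact_mod_cast le_of_lt h
    linarith

lemma payD_star (hR : 2 ≤ R) (hl : IsUpperBound R l) :
    PayD R R (astar R l) (dstar R l) = (R:ℝ) - l := by
  rw [payD_eq]
  have h1 : ∀ j ∈ Finset.range (R+1),
      dstar R l j * phiD R (astar R l) j = dstar R l j * ((R:ℝ) - l) := by
    intro j hj
    have hjR : j ≤ R := by simpa [Nat.lt_succ_iff] using hj
    rcases le_or_gt j l with h | h
    · have hjR' : (j:ℝ) < R := by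
        exact_mod_cast (by have := (ub_lt hR hl).2; omega : j < R)
      rw [phiD, astar_partial hR hl j h, mul_div_cancel₀ _ (by linarith : (R:ℝ) - j ≠ 0)]
    · rw [dstar_zero_of_gt j h, zero_mul, zero_mul]
  rw [Finset.sum_congr rfl h1, ← Finset.sum_mul, dstar_sum hR hl, one_mul]

lemma nash_star (hR : 2 ≤ R) (hl : IsUpperBound R l) :
    IsNash R R (astar R l) (dstar R l) := by
  refine ⟨astar_mixed hR hl, dstar_mixed hR hl, ?_, ?_⟩
  · intro a' ha'
    rw [payA_star hR hl, payA_eq _ _ (dstar_sum hR hl)]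
    exact mixed_sum_le ha' (phiA_dstar_le hR hl)
  · intro d' hd'
    rw [payD_star hR hl, payD_eq]
    exact mixed_sum_le hd' (phiD_astar_le hR hl)

end Aux4
section Aux5
variable {R l : ℕ} {a d : ℕ → ℝ}

lemma phiA_le_vA (hd1 : ∑ j ∈ Finset.range (R+1), d j = 1)
    (hbA : ∀ a', IsMixed R a' → PayA R R a' d ≤ PayA R R a d) :
    ∀ i, i ≤ R → phiA R d i ≤ PayA R R a d := by
  intro i hi
  have h1 := hbA _ (isMixed_pure i hi)
  rwa [payA_eq _ _ hd1, sum_pure_mul i hi] at h1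

lemma phiA_supp (ha : IsMixed R a) (hd1 : ∑ j ∈ Finset.range (R+1), d j = 1)
    (hbA : ∀ a', IsMixed R a' → PayA R R a' d ≤ PayA R R a d) :
    ∀ i, i ≤ R → a i ≠ 0 → phiA R d i = PayA R R a d := by
  intro i hi hne
  exact mixed_support_eq ha (fun i hi => phiA_le_vA hd1 hbA i (by
      simpa [Nat.lt_succ_iff] using hi)) (payA_eq a d hd1).symm hi hne

lemma phiD_le_vD (hbD : ∀ d', IsMixed R d' → PayD R R a d' ≤ PayD R R a d) :
    ∀ j, j ≤ R → phiD R a j ≤ PayD R R a d := by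
  intro j hj
  have h1 := hbD _ (isMixed_pure j hj)
  rwa [payD_eq, sum_pure_mul j hj] at h1

lemma phiD_supp (hd : IsMixed R d)
    (hbD : ∀ d', IsMixed R d' → PayD R R a d' ≤ PayD R R a d) :
    ∀ j, j ≤ R → d j ≠ 0 → phiD R a j = PayD R R a d := by
  intro j hj hne
  exact mixed_support_eq hd (fun j hj => phiD_le_vD hbD j (by
      simpa [Nat.lt_succ_iff] using hj)) (payD_eq a d).symm hj hne

lemma uniq (hR : 2 ≤ R) (hl : IsUpperBound R l) (hN : IsNash R R a d) :
    a = astar R l ∧ d = dstar R l := by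
  obtain ⟨ha, hd, hbA, hbD⟩ := hN
  have ha1 : ∑ i ∈ Finset.range (R+1), a i = 1 := ha.2.2
  have hd1 : ∑ j ∈ Finset.range (R+1), d j = 1 := hd.2.2
  have hAle := phiA_le_vA (a := a) hd1 hbA
  have hAsup := phiA_supp ha hd1 hbA
  have hDle := phiD_le_vD (d := d) hbD
  have hDsup := phiD_supp hd hbD
  have hR2 : (2:ℝ) ≤ (R:ℝ) := by exact_mod_cast hR
  have hlR' : l < R := (ub_lt hR hl).2
  have hphiA0 : phiA R d 0 = R := by simp [phiA, Tt]
  have hvAR : (R:ℝ) ≤ PayA R R a d := hphiA0 ▸ hAle 0 (by omega)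
  have hAann : ∀ j, 0 ≤ Aa a j := fun j => Finset.sum_nonneg fun i _ => ha.1 i
  have hphiDnn : ∀ j, j ≤ R → 0 ≤ phiD R a j := by
    intro j hj
    have : (j:ℝ) ≤ R := by exact_mod_cast hj
    have h1 : (0:ℝ) ≤ (R:ℝ) - j := by linarith
    exact mul_nonneg h1 (hAann j)
  -- Step U1 : the defender's value is positive
  have hvD_pos : 0 < PayD R R a d := by
    rcases lt_or_ge 0 (PayD R R a d) with h | h
    · exact h
    exfalso
    have hvD0 : ∀ j, j ≤ R → phiD R a j = 0 :=
      fun j hj => le_antisymm (le_trans (hDle j hj) h) (hphiDnn j hj)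
    have hAzero : ∀ j, j < R → Aa a j = 0 := by
      intro j hj
      have h1 := hvD0 j (le_of_lt hj)
      have h2 : (j:ℝ) < R := by exact_mod_cast hj
      have h3 : ((R:ℝ) - j) ≠ 0 := by linarith
      rw [phiD, mul_eq_zero] at h1
      tauto
    have hai : ∀ i ∈ Finset.range R, a i = 0 := by
      have h1 : Aa a (R-1) = 0 := hAzero (R-1) (by omega)
      rw [Aa, show R - 1 + 1 = R by omega] at h1
      exact (Finset.sum_eq_zero_iff_of_nonneg fun i _ => ha.1 i).mp h1
    have haR : a R = 1 := by
      rw [Finset.sum_range_succ, Finset.sum_eq_zero hai, zero_add] at ha1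
      exact ha1
    have hTR : Tt R d R = PayA R R a d := by
      have := hAsup R le_rfl (by rw [haR]; norm_num)
      rw [phiA] at this
      linarith
    have hTR' : (R:ℝ) ≤ Tt R d R := by rw [hTR]; exact hvAR
    have e1 : Tt R d R = R * (∑ j ∈ Finset.range R, d j) - ∑ j ∈ Finset.range R, d j * j := by
      rw [Tt, Finset.mul_sum, ← Finset.sum_sub_distrib]
      exact Finset.sum_congr rfl fun j _ => by ring
    have e2 : ∑ j ∈ Finset.range R, d j = 1 - d R := by
      rw [Finset.sum_range_succ] at hd1; linarith
    have e3 : R * d R + ∑ j ∈ Finset.range R, d j * j ≤ 0 := by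
      rw [e1, e2] at hTR'; nlinarith
    have e4 : ∑ j ∈ Finset.range R, d j * j = 0 := by
      have h5 : 0 ≤ ∑ j ∈ Finset.range R, d j * j :=
        Finset.sum_nonneg fun j _ => mul_nonneg (hd.1 j) (Nat.cast_nonneg j)
      have h6 : 0 ≤ (R:ℝ) * d R := mul_nonneg (by linarith) (hd.1 R)
      linarith
    have e5 : ∀ j ∈ Finset.range R, d j * j = 0 :=
      (Finset.sum_eq_zero_iff_of_nonneg fun j _ =>
        mul_nonneg (hd.1 j) (Nat.cast_nonneg j)).mp e4
    have e6R : d R = 0 := by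
      have h8 : (R:ℝ) * d R ≤ 0 := by linarith [e3, e4]
      have h9 : 0 ≤ d R := hd.1 R
      have h10 : d R ≤ 0 := by nlinarith
      linarith
    have e6 : ∀ j, 0 < j → j ≤ R → d j = 0 := by
      intro j hj0 hjR
      rcases lt_or_eq_of_le hjR with h7 | h7
      · have h11 := e5 j (Finset.mem_range.mpr h7)
        have hj0' : ((j:ℝ)) ≠ 0 := by positivity
        exact (mul_eq_zero.mp h11).resolve_right hj0'
      · rw [h7]; exact e6R
    have e7 : d 0 = 1 := by
      rw [Finset.sum_range_succ' ] at hd1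
      rw [Finset.sum_eq_zero (fun j hj => e6 (j+1) (by omega)
        (by have := Finset.mem_range.mp hj; omega)), zero_add] at hd1
      exact hd1
    have e8 : Tt R d 1 = R := by
      rw [Tt]; simp [e7]
    have e9 : Tt R d R = R := by
      rw [e1, e2, e6R]
      rw [Finset.sum_eq_zero]
      · ring
      · intro j hj
        rcases Nat.eq_zero_or_pos j with rfl | hj0
        · simp
        · rw [e6 j hj0 (by have := Finset.mem_range.mp hj; omega), zero_mul]
    have e10 := hAle 1 (by omega)
    rw [phiA, e8, ← hTR, e9] at e10
    norm_num at e10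
    linarith
  -- Step U0 : a 0 ≠ 0 and the attacker's value is R
  have ha0 : a 0 ≠ 0 := by
    by_contra h0
    have key : ∀ j, j ≤ R → Aa a j = 0 ∧ Tt R d (j+1) = 0 := by
      intro j
      induction j with
      | zero =>
        intro _
        have hA0 : Aa a 0 = 0 := by simp [Aa, h0]
        have hd0 : d 0 = 0 := by
          by_contra hc
          have := hDsup 0 (by omega) hc
          rw [phiD, hA0, mul_zero] at this
          linarith
        refine ⟨hA0, ?_⟩
        rw [Tt, Finset.sum_range_one, hd0, zero_mul]
      | succ n ih =>
        intro hn
        obtain ⟨hA, hT⟩ := ih (by omega)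
        have han : a (n+1) = 0 := by
          by_contra hc
          have h1 := hAsup (n+1) hn hc
          rw [phiA, hT] at h1
          have h2 : (1:ℝ) ≤ ((n+1:ℕ):ℝ) := by exact_mod_cast (by omega : 1 ≤ n+1)
          linarith
        have hAn1 : Aa a (n+1) = 0 := by
          rw [Aa, Finset.sum_range_succ, ← Aa, hA, han, add_zero]
        have hdn : d (n+1) = 0 := by
          by_contra hc
          have := hDsup (n+1) hn hc
          rw [phiD, hAn1, mul_zero] at this
          linarith
        refine ⟨hAn1, ?_⟩
        rw [Tt, Finset.sum_range_succ, ← Tt, hT, hdn, zero_mul, add_zero]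
    have h2 := (key R le_rfl).1
    rw [Aa, ha1] at h2
    norm_num at h2
  have hvA : PayA R R a d = R := by
    rw [← hAsup 0 (by omega) ha0, hphiA0]
  have hTle : ∀ i, i ≤ R → Tt R d i ≤ i := by
    intro i hi
    have := hAle i hi
    rw [phiA, hvA] at this
    linarith
  have hTsup : ∀ i, i ≤ R → a i ≠ 0 → Tt R d i = i := by
    intro i hi hne
    have := hAsup i hi hne
    rw [phiA, hvA] at this
    linarith
  -- gap propagation for the defender's support
  have hgap : ∀ j, j + 1 ≤ R → d j = 0 → d (j+1) = 0 := by
    intro j hj hdj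
    have hT : Tt R d (j+1) = Tt R d j := by
      rw [Tt, Finset.sum_range_succ, ← Tt, hdj, zero_mul, add_zero]
    have h1 : Tt R d j ≤ j := hTle j (by omega)
    have haj : a (j+1) = 0 := by
      by_contra hc
      have h2 := hTsup (j+1) hj hc
      rw [hT] at h2
      have h3 : ((j+1:ℕ):ℝ) = (j:ℝ) + 1 := by push_cast; ring
      rw [h3] at h2
      linarith
    have hAa : Aa a (j+1) = Aa a j := by
      rw [Aa, Finset.sum_range_succ, ← Aa, haj, add_zero]
    by_contra hc
    have h4 := hDsup (j+1) hj hc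
    have h5 := hDle j (by omega)
    rw [phiD, hAa] at h4
    rw [phiD] at h5
    have h6 : ((R:ℝ) - ((j+1:ℕ):ℝ)) = ((R:ℝ) - j) - 1 := by push_cast; ring
    rw [h6] at h4
    have h7 : Aa a j ≤ 0 := by nlinarith [hAann j]
    have h8 : Aa a j = 0 := le_antisymm h7 (hAann j)
    rw [h8, mul_zero] at h4
    linarith
  have hgap2 : ∀ k j, j + k ≤ R → d j = 0 → d (j+k) = 0 := by
    intro k
    induction k with
    | zero => intro j _ h; simpa using h
    | succ n ih =>
      intro j hjk hdj
      have h1 : d (j+n) = 0 := ih j (by omega) hdj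
      have h2 := hgap (j+n) (by omega) h1
      simpa [show j + (n+1) = (j+n)+1 by omega] using h2
  -- the maximum of the defender's support
  have hQne : ((Finset.range (R+1)).filter (fun j => d j ≠ 0)).Nonempty := by
    by_contra hc
    rw [Finset.not_nonempty_iff_eq_empty, Finset.filter_eq_empty_iff] at hc
    simp only [not_not] at hc
    rw [Finset.sum_congr rfl (fun j hj => hc hj), Finset.sum_const, smul_zero] at hd1
    norm_num at hd1
  set L := ((Finset.range (R+1)).filter (fun j => d j ≠ 0)).max' hQne with hLdef
  have hLmem : L ∈ (Finset.range (R+1)).filter (fun j => d j ≠ 0) := by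
    rw [hLdef]; exact Finset.max'_mem _ hQne
  have hdL : d L ≠ 0 := (Finset.mem_filter.mp hLmem).2
  have hLR : L ≤ R := by
    have h := Finset.mem_range.mp (Finset.mem_filter.mp hLmem).1
    omega
  have hLmax : ∀ j, j ≤ R → L < j → d j = 0 := by
    intro j hj hLj
    by_contra hc
    have hmem : j ∈ (Finset.range (R+1)).filter (fun j => d j ≠ 0) :=
      Finset.mem_filter.mpr ⟨Finset.mem_range.mpr (by omega), hc⟩
    have := Finset.le_max' _ j hmem
    omega
  have hdz : ∀ j, L < j → d j = 0 := by
    intro j hj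
    rcases le_or_gt j R with h | h
    · exact hLmax j h hj
    · exact hd.2.1 j h
  have hRL : (0:ℝ) < (R:ℝ) - L := by
    have h1 := hDsup L hLR hdL
    rw [phiD] at h1
    have h2 : (L:ℝ) ≤ R := by exact_mod_cast hLR
    rcases lt_or_eq_of_le (by linarith : (0:ℝ) ≤ (R:ℝ) - L) with h3 | h3
    · exact h3
    · rw [← h3, zero_mul] at h1; linarith
  have hLltR : L < R := by exact_mod_cast (by linarith : (L:ℝ) < R)
  have hdpos : ∀ j, j ≤ L → d j ≠ 0 := by
    intro j hj h0
    have h1 := hgap2 (L - j) j (by omega) h0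
    rw [show j + (L - j) = L by omega] at h1
    exact hdL h1
  have hAval : ∀ j, j ≤ L → Aa a j = PayD R R a d / ((R:ℝ) - j) := by
    intro j hj
    have h1 := hDsup j (by omega) (hdpos j hj)
    rw [phiD] at h1
    have h2 : (j:ℝ) < R := by exact_mod_cast (by omega : j < R)
    rw [eq_div_iff (by linarith : (R:ℝ) - j ≠ 0)]
    linarith [h1]
  have hapos : ∀ i, i ≤ L → a i ≠ 0 := by
    intro i hi
    rcases Nat.eq_zero_or_pos i with rfl | hi0
    · exact ha0
    · obtain ⟨n, rfl⟩ : ∃ n, i = n + 1 := ⟨i - 1, by omega⟩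
      have hn : n ≤ L := by omega
      have hx : (n:ℝ) < (R:ℝ) - 1 := by
        have : ((n+1:ℕ):ℝ) < R := by exact_mod_cast (by omega : n+1 < R)
        push_cast at this; linarith
      have h1 : Aa a (n+1) = Aa a n + a (n+1) := by
        rw [Aa, Finset.sum_range_succ, ← Aa]
      have h2 := hAval (n+1) hi
      have h3 := hAval n hn
      have h4 : ((n+1:ℕ):ℝ) = (n:ℝ) + 1 := by push_cast; ring
      rw [h4] at h2
      have h5 : PayD R R a d / ((R:ℝ) - n) < PayD R R a d / ((R:ℝ) - ((n:ℝ)+1)) := by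
        apply div_lt_div_of_pos_left hvD_pos (by linarith) (by linarith)
      intro hc
      rw [h1, h3, hc, add_zero] at h2
      linarith [h2, h5]
  have hTeq : ∀ i, i ≤ L → Tt R d i = i :=
    fun i hi => hTsup i (by omega) (hapos i hi)
  have hdval : ∀ j, j < L → d j = 1 / ((R:ℝ) - j) := by
    intro j hj
    have h1 := hTeq j (by omega)
    have h2 := hTeq (j+1) (by omega)
    rw [Tt, Finset.sum_range_succ, ← Tt, h1] at h2
    have h3 : ((j+1:ℕ):ℝ) = (j:ℝ) + 1 := by push_cast; ring
    rw [h3] at h2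
    have h4 : (j:ℝ) < R := by exact_mod_cast (by omega : j < R)
    rw [eq_div_iff (by linarith : (R:ℝ) - j ≠ 0)]
    linarith
  have hsumL : ∑ j ∈ Finset.range (R+1), d j = ∑ j ∈ Finset.range (L+1), d j := by
    rw [← Finset.sum_subset (Finset.range_subset_range.mpr (by omega : L+1 ≤ R+1))]
    intro j hj hj2
    exact hLmax j (by simpa [Nat.lt_succ_iff] using hj) (by simpa using hj2)
  have hdLval : d L = 1 - ∑ j ∈ Finset.range L, 1 / ((R:ℝ) - j) := by
    have h1 : ∑ j ∈ Finset.range L, d j = ∑ j ∈ Finset.range L, 1 / ((R:ℝ) - j) :=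
      Finset.sum_congr rfl fun j hj => hdval j (Finset.mem_range.mp hj)
    rw [hsumL, Finset.sum_range_succ, h1] at hd1
    linarith
  have hSL_lt : ∑ j ∈ Finset.range L, 1 / ((R:ℝ) - j) < 1 := by
    have h1 : 0 < d L := lt_of_le_of_ne (hd.1 L) (Ne.symm hdL)
    rw [hdLval] at h1
    linarith
  have hL_le_l : L ≤ l := by
    by_contra hc
    have h1 : l + 1 ≤ L := by omega
    have h2 := sum_inv_mono' (R := R) h1 hLR
    have h3 := ub_lt_S hR hl
    linarith
  have hTL1 : Tt R d (L+1) = (L:ℝ) + d L * ((R:ℝ) - L) := by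
    rw [Tt, Finset.sum_range_succ, ← Tt, hTeq L le_rfl]
  have hdev : d L * ((R:ℝ) - L) ≤ 1 := by
    have h1 := hTle (L+1) (by omega)
    rw [hTL1] at h1
    have h2 : ((L+1:ℕ):ℝ) = (L:ℝ) + 1 := by push_cast; ring
    rw [h2] at h1
    linarith
  have hS1 : 1 ≤ ∑ j ∈ Finset.range (L+1), 1 / ((R:ℝ) - j) := by
    rw [Finset.sum_range_succ]
    have h1 : 1 - ∑ j ∈ Finset.range L, 1 / ((R:ℝ) - j) ≤ 1 / ((R:ℝ) - L) := by
      rw [← hdLval, le_div_iff₀ hRL]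
      exact hdev
    linarith
  have hl_le_L : l ≤ L := by
    by_contra hc
    have h1 : L + 1 ≤ l := by omega
    have h2 := sum_inv_mono' (R := R) h1 (by omega : l ≤ R)
    have h3 := ub_S_lt hR hl
    linarith
  have hLl : L = l := le_antisymm hL_le_l hl_le_L
  -- attacker puts no weight above L
  have hahigh : ∀ i, L < i → i ≤ R → a i = 0 := by
    intro i hi hiR
    by_contra hc
    have h1 := hTsup i hiR hc
    have h2 : Tt R d i = Tt R d (L+1) := Tt_high hdz i (by omega)
    rw [h2, hTL1] at h1
    have h3 : (L:ℝ) + 1 ≤ (i:ℝ) := by exact_mod_cast (by omega : L + 1 ≤ i)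
    have h4 : d L * ((R:ℝ) - L) = 1 := by linarith [hdev]
    have h5 : d L = 1 / ((R:ℝ) - L) := by
      rw [eq_div_iff (ne_of_gt hRL)]; exact h4
    have h6 : ∑ j ∈ Finset.range (L+1), 1 / ((R:ℝ) - j) = 1 := by
      rw [Finset.sum_range_succ, ← h5, hdLval]; ring
    have h7 := ub_lt_S hR hl
    rw [← hLl] at h7
    linarith
  have hAL1 : Aa a L = 1 := by
    rw [Aa, ← ha1, ← Finset.sum_subset (Finset.range_subset_range.mpr (by omega : L+1 ≤ R+1))]
    intro i hi hi2
    exact hahigh i (by simpa using hi2) (by simpa [Nat.lt_succ_iff] using hi)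
  have hvD_val : PayD R R a d = (R:ℝ) - L := by
    have h1 := hDsup L hLR hdL
    rw [phiD, hAL1, mul_one] at h1
    linarith
  -- conclude
  constructor
  · funext i
    rcases le_or_gt i R with hiR | hiR
    · rcases Nat.eq_zero_or_pos i with rfl | hi0
      · have h1 := hAval 0 (by omega)
        rw [Aa, Finset.sum_range_one] at h1
        rw [h1, hvD_val, astar, if_pos rfl, hLl]
        norm_num
      · rcases le_or_gt i l with hil | hil
        · obtain ⟨n, rfl⟩ : ∃ n, i = n + 1 := ⟨i - 1, by omega⟩
          have hn1 : n + 1 ≤ L := by omega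
          have h1 : Aa a (n+1) = Aa a n + a (n+1) := by
            rw [Aa, Finset.sum_range_succ, ← Aa]
          have h2 := hAval (n+1) hn1
          have h3 := hAval n (by omega)
          have hx : (n:ℝ) < (R:ℝ) - 1 := by
            have : ((n+1:ℕ):ℝ) < R := by exact_mod_cast (by omega : n+1 < R)
            push_cast at this; linarith
          have h4 : ((n+1:ℕ):ℝ) = (n:ℝ) + 1 := by push_cast; ring
          rw [h4] at h2
          have h5 : a (n+1) = PayD R R a d / ((R:ℝ) - ((n:ℝ)+1))
              - PayD R R a d / ((R:ℝ) - n) := by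
            rw [← h2, ← h3, h1]; ring
          rw [h5, hvD_val, hLl, astar, if_neg (by omega), if_pos hil]
          push_cast
          rw [show (R:ℝ) - ((n:ℝ)+1) + 1 = (R:ℝ) - n by ring,
            show (R:ℝ) - ((n:ℝ)+1) = (R:ℝ) - n - 1 by ring]
          exact tele_aux2 _ _ (by linarith) (by linarith)
        · rw [hahigh i (by omega) hiR, astar_zero_of_gt i hil]
    · rw [ha.2.1 i hiR, astar_zero_of_gt i (by have := (ub_lt hR hl).2; omega)]
  · funext j
    rcases le_or_gt j R with hjR | hjR
    · rcases lt_trichotomy j l with hjl | hjl | hjl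
      · rw [hdval j (by omega), dstar, if_pos hjl]
      · subst hjl
        rw [dstar, if_neg (lt_irrefl j), if_pos rfl, ← hLl]
        exact hdLval
      · rw [hLmax j hjR (by omega), dstar_zero_of_gt j hjl]
    · rw [hd.2.1 j hjR, dstar_zero_of_gt j (by have := (ub_lt hR hl).2; omega)]

end Aux5
/-- The A-D game with equal endowments `R` has exactly one mixed-strategy Nash
equilibrium, namely `(astar R l, dstar R l)` where `l` is the upper bound `l*`. -/
theorem equal_endowments_unique_equilibrium (R l : ℕ) (hR : 2 ≤ R) (hl : IsUpperBound R l) :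
    IsNash R R (astar R l) (dstar R l) ∧
    ∀ a d : ℕ → ℝ, IsNash R R a d → a = astar R l ∧ d = dstar R l := by
  exact ⟨nash_star hR hl, fun a d hN => uniq hR hl hN⟩
end

section
/- Attacker's share of expected equilibrium earnings in the Attacker-Defender game with equal endowments R converges to e/(e+1) as R goes to infinity: lim_{R→∞} Π_A/(Π_A + Π_D) = lim_{R→∞} R/(2R − l*(R)) = e/(e+1). -/
/-!
For every `l < R` the profile `(astar R l, dstar R l)` pays Attacker `R` and Defender `R - l`:
against `dstar` every investment `i ≤ l` earns Attacker exactly `R`, and the probabilities of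
`astar` are increments of `k ↦ (R - l) / (R - k)`, so its total mass and first moment telescope.
Hence the share is `R / (2R - l*)`. Comparing harmonic differences with logarithms (the
monotonicity of the Euler–Mascheroni sequences), the defining inequalities of `l*` give
`|e (R - l*) - R| ≤ e`, so `(R - l*) / R → 1/e` and the share tends to
`1 / (1 + 1/e) = e / (e + 1)`.
-/

open Finset Filter Real Topology

lemma sum_range_eq_sum_range_of_eq_zero {M : Type*} [AddCommMonoid M] {f : ℕ → M} {m n : ℕ}
    (hmn : m ≤ n) (hf : ∀ k, m ≤ k → f k = 0) :
    ∑ k ∈ range n, f k = ∑ k ∈ range m, f k := by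
  rw [← sum_range_add_sum_Ico f hmn, sum_eq_zero fun k hk => hf k (mem_Ico.mp hk).1, add_zero]

lemma sum_sum_mul_mul_eq_sum_mul_sum {ι κ α : Type*} [Semiring α]
    {s : Finset ι} {t : Finset κ} (a : ι → α) (d : κ → α) (p : ι → κ → α) :
    ∑ i ∈ s, ∑ j ∈ t, a i * d j * p i j = ∑ i ∈ s, a i * ∑ j ∈ t, d j * p i j := by
  simp only [mul_sum, mul_assoc]

lemma natCast_sub_natCast_pos {j R : ℕ} (h : j < R) : (0 : ℝ) < R - j :=
  sub_pos.mpr (by exact_mod_cast h)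

section Equilibrium

variable {R l : ℕ}

lemma dstar_of_lt {j : ℕ} (hj : j < l) : dstar R l j = 1 / ((R : ℝ) - j) := if_pos hj

lemma dstar_self : dstar R l l = 1 - ∑ k ∈ range l, 1 / ((R : ℝ) - k) := by
  simp [dstar]

lemma dstar_of_gt {j : ℕ} (hj : l < j) : dstar R l j = 0 := by
  simp [dstar, hj.ne', hj.not_gt]

lemma astar_zero : astar R l 0 = ((R : ℝ) - l) / R := if_pos rfl

lemma astar_of_gt {i : ℕ} (hi : l < i) : astar R l i = 0 := by
  simp [astar, hi.not_ge, (Nat.zero_le l).trans_lt hi |>.ne']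

lemma dstar_mul_sub_self {j : ℕ} (hl : l ≤ R) (hj : j < l) :
    dstar R l j * ((R : ℝ) - j) = 1 := by
  rw [dstar_of_lt hj, one_div_mul_cancel (natCast_sub_natCast_pos (hj.trans_le hl)).ne']

lemma sum_dstar (hl : l ≤ R) : ∑ j ∈ range (R + 1), dstar R l j = 1 := by
  rw [sum_range_eq_sum_range_of_eq_zero (by omega : l + 1 ≤ R + 1) fun j hj => dstar_of_gt hj,
    sum_range_succ, sum_congr rfl fun j hj => dstar_of_lt (mem_range.mp hj), dstar_self]
  ring

lemma astar_succ (hl : l < R) {i : ℕ} (hi : i < l) :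
    astar R l (i + 1) = ((R : ℝ) - l) / (R - (i + 1 : ℕ)) - ((R : ℝ) - l) / (R - i) := by
  have h₁ := natCast_sub_natCast_pos (hi.trans hl)
  have h₂ := natCast_sub_natCast_pos (show i + 1 < R by omega)
  push_cast at h₂ ⊢
  simp only [astar, Nat.add_one_ne_zero, if_false, if_pos (show i + 1 ≤ l by omega)]
  push_cast
  field_simp
  ring

lemma sum_astar (hl : l < R) : ∑ i ∈ range (l + 1), astar R l i = 1 := by
  rw [sum_range_succ', sum_congr rfl fun i hi => astar_succ hl (mem_range.mp hi),
    sum_range_sub (fun k : ℕ => ((R : ℝ) - l) / (R - k)), astar_zero,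
    Nat.cast_zero, sub_zero, div_self (natCast_sub_natCast_pos hl).ne']
  ring

lemma sum_astar_mul_self (hl : l < R) :
    ∑ i ∈ range (l + 1), astar R l i * i
      = l - ((R : ℝ) - l) * ∑ k ∈ range l, 1 / ((R : ℝ) - k) := by
  set f : ℕ → ℝ := fun k => ((R : ℝ) - l) / (R - k)
  have hparts : ∀ i ∈ range l, astar R l (i + 1) * (i + 1 : ℕ)
      = ((i + 1 : ℕ) * f (i + 1) - i * f i) - ((R : ℝ) - l) * (1 / ((R : ℝ) - i)) := by
    intro i hi
    rw [astar_succ hl (mem_range.mp hi)]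
    simp only [f]
    push_cast
    ring
  rw [sum_range_succ', sum_congr rfl hparts, sum_sub_distrib,
    sum_range_sub (fun k : ℕ => (k : ℝ) * f k), ← mul_sum]
  simp only [f]
  field_simp [(natCast_sub_natCast_pos hl).ne']
  simp

lemma sum_dstar_mul_piA (hl : l < R) {i : ℕ} (hi : i ≤ l) :
    ∑ j ∈ range (R + 1), dstar R l j * piA R R i j = R := by
  have hsplit : ∀ j, dstar R l j * piA R R i j
      = dstar R l j * ((R : ℝ) - i) + if j < i then dstar R l j * ((R : ℝ) - j) else 0 := by
    intro j
    simp only [piA]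
    split_ifs <;> ring
  rw [sum_congr rfl fun j _ => hsplit j, sum_add_distrib, ← sum_mul, sum_dstar hl.le,
    ← sum_range_add_sum_Ico _ (by omega : i ≤ R + 1),
    sum_congr rfl fun j hj => if_pos (mem_range.mp hj),
    sum_eq_zero fun j hj => if_neg (mem_Ico.mp hj).1.not_gt,
    sum_congr rfl fun j hj => dstar_mul_sub_self hl.le ((mem_range.mp hj).trans_le hi)]
  simp

lemma sum_dstar_mul_piD (hl : l < R) {i : ℕ} (hi : i ≤ l) :
    ∑ j ∈ range (R + 1), dstar R l j * piD R i j
      = (l - i) + ((R : ℝ) - l) * (1 - ∑ k ∈ range l, 1 / ((R : ℝ) - k)) := by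
  rw [sum_range_eq_sum_range_of_eq_zero (by omega : l + 1 ≤ R + 1)
      fun j hj => by rw [dstar_of_gt hj, zero_mul],
    sum_range_succ, ← sum_range_add_sum_Ico _ hi,
    sum_eq_zero fun j hj => by rw [piD, if_pos (mem_range.mp hj), mul_zero],
    sum_congr rfl fun j hj => by
      rw [piD, if_neg (mem_Ico.mp hj).1.not_gt, dstar_mul_sub_self hl.le (mem_Ico.mp hj).2],
    piD, if_neg hi.not_gt, dstar_self]
  simp [Nat.cast_sub hi]
  ring

lemma payA_astar_dstar (hl : l < R) : PayA R R (astar R l) (dstar R l) = R := by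
  rw [PayA, sum_sum_mul_mul_eq_sum_mul_sum,
    sum_range_eq_sum_range_of_eq_zero (by omega : l + 1 ≤ R + 1)
      fun i hi => by rw [astar_of_gt hi, zero_mul],
    sum_congr rfl fun i hi => by
      rw [sum_dstar_mul_piA hl (Nat.lt_succ_iff.mp (mem_range.mp hi))],
    ← sum_mul, sum_astar hl, one_mul]

lemma payD_astar_dstar (hl : l < R) : PayD R R (astar R l) (dstar R l) = R - l := by
  rw [PayD, sum_sum_mul_mul_eq_sum_mul_sum,
    sum_range_eq_sum_range_of_eq_zero (by omega : l + 1 ≤ R + 1)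
      fun i hi => by rw [astar_of_gt hi, zero_mul],
    sum_congr rfl fun i hi => by
      rw [sum_dstar_mul_piD hl (Nat.lt_succ_iff.mp (mem_range.mp hi)), mul_add, mul_sub],
    sum_add_distrib, sum_sub_distrib, ← sum_mul, ← sum_mul, sum_astar hl, sum_astar_mul_self hl]
  ring

end Equilibrium

lemma H_eq_harmonic (n : ℕ) : H n = harmonic n := by
  simp [H, harmonic_eq_sum_Icc]

lemma log_sub_log_le_H_sub_H {m n : ℕ} (h : m ≤ n) :
    log ((n : ℝ) + 1) - log ((m : ℝ) + 1) ≤ H n - H m := by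
  have := strictMono_eulerMascheroniSeq.monotone h
  simp only [eulerMascheroniSeq] at this
  rw [H_eq_harmonic, H_eq_harmonic]
  linarith

lemma H_sub_H_le_log_sub_log {m n : ℕ} (hm : m ≠ 0) (h : m ≤ n) :
    H n - H m ≤ log n - log m := by
  have := strictAnti_eulerMascheroniSeq'.antitone h
  simp only [eulerMascheroniSeq', hm, (Nat.pos_of_ne_zero hm).trans_le h |>.ne', if_false] at this
  rw [H_eq_harmonic, H_eq_harmonic]
  linarith

namespace IsUpperBound

variable {R l : ℕ}

lemma lt (h : IsUpperBound R l) : l < R := by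
  obtain ⟨h₁, h₂, -⟩ := h
  omega

lemma add_one_lt_exp_mul (h : IsUpperBound R l) : (R : ℝ) + 1 < exp 1 * (R - l + 1) := by
  have hlog : log ((R : ℝ) + 1) - log ((R - l : ℕ) + 1 : ℝ) < 1 :=
    (log_sub_log_le_H_sub_H (Nat.sub_le R l)).trans_lt h.2.2.1
  have hpos : (0 : ℝ) < R - l + 1 := by linarith [natCast_sub_natCast_pos h.lt]
  rw [Nat.cast_sub h.lt.le, ← log_div (by positivity) hpos.ne',
    log_lt_iff_lt_exp (div_pos (by positivity) hpos), div_lt_iff₀ hpos] at hlog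
  linarith

lemma exp_mul_lt (h : IsUpperBound R l) : exp 1 * (R - l - 1) < R := by
  have hcast : ((R - l - 1 : ℕ) : ℝ) = R - l - 1 := by
    rw [Nat.cast_sub (by have := h.lt; omega), Nat.cast_sub h.lt.le, Nat.cast_one]
  rcases Nat.eq_zero_or_pos (R - l - 1) with hm | hm
  · rw [← hcast, hm, Nat.cast_zero, mul_zero]
    exact_mod_cast (Nat.zero_le l).trans_lt h.lt
  · have hlog : 1 < log R - log (R - l - 1 : ℕ) :=
      h.2.2.2.trans_le (H_sub_H_le_log_sub_log hm.ne' (by omega))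
    have hR : (0 : ℝ) < R := by exact_mod_cast (Nat.zero_le l).trans_lt h.lt
    have hpos : (0 : ℝ) < (R - l - 1 : ℕ) := by exact_mod_cast hm
    rw [← log_div hR.ne' hpos.ne', lt_log_iff_exp_lt (div_pos hR hpos),
      lt_div_iff₀ hpos, hcast] at hlog
    linarith

lemma abs_sub_div_sub_inv_exp_le (h : IsUpperBound R l) :
    |((R : ℝ) - l) / R - (exp 1)⁻¹| ≤ 1 / R := by
  have hR : (0 : ℝ) < R := by exact_mod_cast (Nat.zero_le l).trans_lt h.lt
  have he := exp_pos 1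
  have hlow := h.add_one_lt_exp_mul
  have hupp := h.exp_mul_lt
  have hrw : ((R : ℝ) - l) / R - (exp 1)⁻¹ = (exp 1 * (R - l) - R) / (exp 1 * R) := by
    field_simp
  have hbound : 1 / (R : ℝ) * (exp 1 * R) = exp 1 := by field_simp
  rw [hrw, abs_div, abs_of_pos (mul_pos he hR), div_le_iff₀ (mul_pos he hR), hbound, abs_le]
  constructor <;> linarith

end IsUpperBound

lemma tendsto_sub_div_of_isUpperBound {L : ℕ → ℕ}
    (hL : ∀ R, 2 ≤ R → IsUpperBound R (L R)) :
    Tendsto (fun R : ℕ => ((R : ℝ) - L R) / R) atTop (𝓝 (exp 1)⁻¹) := by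
  rw [tendsto_iff_norm_sub_tendsto_zero]
  refine squeeze_zero_norm' ?_ tendsto_one_div_atTop_nhds_zero_nat
  filter_upwards [eventually_ge_atTop 2] with R hR
  rw [norm_norm]
  exact (hL R hR).abs_sub_div_sub_inv_exp_le

/-- Attacker's share of expected equilibrium earnings converges to `e/(e+1)`:
both as the ratio of expected payoffs and in the closed form `R/(2R - l*)`. -/
theorem attacker_share_tendsto (L : ℕ → ℕ) (hL : ∀ R, 2 ≤ R → IsUpperBound R (L R)) :
    Filter.Tendsto (fun R : ℕ =>
        PayA R R (astar R (L R)) (dstar R (L R)) /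
          (PayA R R (astar R (L R)) (dstar R (L R)) +
            PayD R R (astar R (L R)) (dstar R (L R)))) Filter.atTop
      (nhds (Real.exp 1 / (Real.exp 1 + 1))) ∧
    Filter.Tendsto (fun R : ℕ => (R : ℝ) / (2 * (R : ℝ) - L R)) Filter.atTop
      (nhds (Real.exp 1 / (Real.exp 1 + 1))) := by
  have hlim : (1 + (exp 1)⁻¹)⁻¹ = exp 1 / (exp 1 + 1) := by
    field_simp [(exp_pos 1).ne']
  have hclosed : Tendsto (fun R : ℕ => (R : ℝ) / (2 * (R : ℝ) - L R)) atTop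
      (𝓝 (exp 1 / (exp 1 + 1))) := by
    rw [← hlim]
    refine ((tendsto_sub_div_of_isUpperBound hL).const_add 1 |>.inv₀ (by positivity)).congr' ?_
    filter_upwards [eventually_ge_atTop 1] with R hR
    have hR₀ : (R : ℝ) ≠ 0 := by exact_mod_cast (by omega : R ≠ 0)
    rw [← inv_div]
    field_simp
    ring
  refine ⟨hclosed.congr' ?_, hclosed⟩
  filter_upwards [eventually_ge_atTop 2] with R hR
  rw [payA_astar_dstar (hL R hR).lt, payD_astar_dstar (hL R hR).lt]
  congr 1
  ring
end
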